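/- The family given by ψ_p(x) = (1 + x)^p − 1 (for all primes p) is a filtered λ-ring structure on ℤ[x]/(x⁴), and every filtered λ-ring structure R on ℤ[x]/(x⁴) satisfying ψ_p^R(x) ≡ p x (mod x²) for all primes p is isomorphic to it. -/

import Mathlib

open Polynomial

noncomputable section

/-- The truncated polynomial ring `ℤ[x]/(xⁿ)`. -/
abbrev TP (n : ℕ) : Type := Polynomial ℤ ⧸ Ideal.span {(X : Polynomial ℤ) ^ n}

/-- The class of `x` in `ℤ[x]/(xⁿ)`. -/
def xx (n : ℕ) : TP n := Ideal.Quotient.mk _ (X : Polynomial ℤ)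

/-- A filtered λ-ring structure on `ℤ[x]/(xⁿ)`, presented (via Wilkerson's theorem) as a
family of Adams operations `ψ p`, indexed by the primes `p`: each `ψ p` is a ring
endomorphism preserving the filtration ideal `(x)`, they pairwise commute, and
`ψ p r ≡ r ^ p (mod p)`. -/
structure AdamsFamily (n : ℕ) : Type where
  ψ : Nat.Primes → (TP n →+* TP n)
  maps_ideal : ∀ (p : Nat.Primes), ∀ a ∈ Ideal.span {xx n}, ψ p a ∈ Ideal.span {xx n}
  comm : ∀ p q : Nat.Primes, (ψ p).comp (ψ q) = (ψ q).comp (ψ p)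
  frob : ∀ (p : Nat.Primes) (a : TP n),
    ψ p a - a ^ (p : ℕ) ∈ Ideal.span {((p : ℕ) : TP n)}

/-- Isomorphism of filtered λ-ring structures on `ℤ[x]/(xⁿ)`: a filtration-preserving ring
automorphism intertwining the Adams operations. -/
def AdamsIso {n : ℕ} (R S : AdamsFamily n) : Prop :=
  ∃ σ : TP n ≃+* TP n,
    (Ideal.span {xx n}).map σ.toRingHom = Ideal.span {xx n} ∧
    ∀ p : Nat.Primes, σ.toRingHom.comp (R.ψ p) = (S.ψ p).comp σ.toRingHom

/-- The prime 2 as an element of `Nat.Primes`. -/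
def P2 : Nat.Primes := ⟨2, Nat.prime_two⟩

/-- The prime 3 as an element of `Nat.Primes`. -/
def P3 : Nat.Primes := ⟨3, Nat.prime_three⟩

/-!
A ring endomorphism of `ℤ[x]/(xⁿ)` is determined by the image of `x`. The operations
`x ↦ (1 + x)^p - 1` commute because `(1 + x)^(pq) - 1` is symmetric in `p, q`, and they lift
Frobenius because `(1 + x)^p ≡ 1 + x^p (mod p)`.

For uniqueness write `ψ_p(x) = p x + b_p x² + c_p x³`. Comparing the coefficients of `x²` and `x³`
in `h ∘ ψ_2 = ψ'_2 ∘ h` determines those of `h(x)` from its linear coefficient, as `2³ ≠ 2`; so it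
suffices to conjugate `ψ_2` to the standard `2x + x²`. The substitution `x ↦ x + u x² + v x³` does
this exactly when `b_2 = 2u + 1` and `6v = 4u² - 2u + c_2`. The Frobenius congruences make `b_2`
odd, `c_2` even and `c_3 ≡ 1 (mod 3)`, and commuting `ψ_3` with `ψ_2` gives
`c_3 = 4 c_2 + b_2²`; together these make `4u² - 2u + c_2` divisible by `6`.
-/

namespace TP

variable {n : ℕ}

lemma mk_X : Ideal.Quotient.mk _ (X : ℤ[X]) = xx n := rfl

lemma xx_pow_self : xx n ^ n = 0 := by
  rw [← mk_X, ← map_pow, Ideal.Quotient.eq_zero_iff_mem]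
  exact Ideal.mem_span_singleton_self _

lemma pow_self_eq_zero_of_mem {a : TP n} (ha : a ∈ Ideal.span {xx n}) : a ^ n = 0 := by
  obtain ⟨t, rfl⟩ := Ideal.mem_span_singleton'.1 ha
  rw [mul_pow, xx_pow_self, mul_zero]

lemma ringHom_ext {A : Type*} [Semiring A] {f g : TP n →+* A} (h : f (xx n) = g (xx n)) :
    f = g :=
  Ideal.Quotient.ringHom_ext (Polynomial.ringHom_ext' (RingHom.ext_int _ _) h)

def lift {A : Type*} [CommRing A] (a : A) (ha : a ^ n = 0) : TP n →+* A :=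
  Ideal.Quotient.lift _ (eval₂RingHom (Int.castRingHom A) a) fun P hP => by
    obtain ⟨Q, rfl⟩ := Ideal.mem_span_singleton'.1 hP
    simp [ha]

@[simp]
lemma lift_xx {A : Type*} [CommRing A] (a : A) (ha : a ^ n = 0) : lift a ha (xx n) = a := by
  simp [lift, ← mk_X]

lemma map_span_xx_eq (σ : TP n ≃+* TP n) (h : σ (xx n) ∈ Ideal.span {xx n})
    (h' : σ.symm (xx n) ∈ Ideal.span {xx n}) :
    (Ideal.span {xx n}).map σ.toRingHom = Ideal.span {xx n} := by
  rw [Ideal.map_span, Set.image_singleton]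
  refine le_antisymm ((Ideal.span_singleton_le_iff_mem _).2 h) ?_
  obtain ⟨t, ht⟩ := Ideal.mem_span_singleton'.1 h'
  rw [Ideal.span_singleton_le_span_singleton]
  exact ⟨σ t, by simpa [mul_comm] using congrArg σ ht.symm⟩

lemma charP_quotient_span_natCast (p : ℕ) [hp : Fact p.Prime]
    (hI : Ideal.span {(p : TP n)} ≠ ⊤) : CharP (TP n ⧸ Ideal.span {(p : TP n)}) p :=
  have := Ideal.Quotient.nontrivial_iff.2 hI
  (CharP.charP_iff_prime_eq_zero hp.out).2 <| by
    rw [← map_natCast (Ideal.Quotient.mk (Ideal.span {(p : TP n)})),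
      Ideal.Quotient.eq_zero_iff_mem]
    exact Ideal.mem_span_singleton_self _

lemma sub_pow_mem_span_of_xx (p : ℕ) [Fact p.Prime] (φ : TP n →+* TP n)
    (h : φ (xx n) - xx n ^ p ∈ Ideal.span {(p : TP n)}) (a : TP n) :
    φ a - a ^ p ∈ Ideal.span {(p : TP n)} := by
  by_cases hI : Ideal.span {(p : TP n)} = ⊤
  · simp [hI]
  have := charP_quotient_span_natCast p hI
  let π := Ideal.Quotient.mk (Ideal.span {(p : TP n)})
  have hπ : π.comp φ = (frobenius (TP n ⧸ Ideal.span {(p : TP n)}) p).comp π :=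
    ringHom_ext <| by
      have := Ideal.Quotient.eq_zero_iff_mem.2 h
      rw [map_sub, map_pow, sub_eq_zero] at this
      simpa [π, frobenius_def] using this
  rw [← Ideal.Quotient.eq_zero_iff_mem, map_sub, map_pow, sub_eq_zero]
  exact RingHom.congr_fun hπ a

def ofCoeffs (a b c d : ℤ) : TP 4 := a + b * xx 4 + c * xx 4 ^ 2 + d * xx 4 ^ 3

lemma ofCoeffs_add (a b c d a' b' c' d' : ℤ) :
    ofCoeffs a b c d + ofCoeffs a' b' c' d' = ofCoeffs (a + a') (b + b') (c + c') (d + d') := by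
  simp only [ofCoeffs]; push_cast; ring

lemma ofCoeffs_sub (a b c d a' b' c' d' : ℤ) :
    ofCoeffs a b c d - ofCoeffs a' b' c' d' = ofCoeffs (a - a') (b - b') (c - c') (d - d') := by
  simp only [ofCoeffs]; push_cast; ring

lemma ofCoeffs_mul (a b c d a' b' c' d' : ℤ) :
    ofCoeffs a b c d * ofCoeffs a' b' c' d' =
      ofCoeffs (a * a') (a * b' + b * a') (a * c' + b * b' + c * a')
        (a * d' + b * c' + c * b' + d * a') := by
  simp only [ofCoeffs]; push_cast
  linear_combination (b * d' + c * c' + d * b' + (c * d' + d * c') * xx 4 + d * d' * xx 4 ^ 2 :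
    TP 4) * xx_pow_self (n := 4)

lemma intCast_eq_ofCoeffs (a : ℤ) : (a : TP 4) = ofCoeffs a 0 0 0 := by simp [ofCoeffs]

lemma one_eq_ofCoeffs : (1 : TP 4) = ofCoeffs 1 0 0 0 := by simp [ofCoeffs]

lemma xx_eq_ofCoeffs : xx 4 = ofCoeffs 0 1 0 0 := by simp [ofCoeffs]

lemma xx_sq_eq_ofCoeffs : xx 4 ^ 2 = ofCoeffs 0 0 1 0 := by simp [ofCoeffs]

lemma xx_cube_eq_ofCoeffs : xx 4 ^ 3 = ofCoeffs 0 0 0 1 := by simp [ofCoeffs]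

lemma ofCoeffs_inj {a b c d a' b' c' d' : ℤ} :
    ofCoeffs a b c d = ofCoeffs a' b' c' d' ↔ a = a' ∧ b = b' ∧ c = c' ∧ d = d' := by
  refine ⟨fun h => ?_, by rintro ⟨rfl, rfl, rfl, rfl⟩; rfl⟩
  set P : ℤ[X] := C (a - a') + C (b - b') * X + C (c - c') * X ^ 2 + C (d - d') * X ^ 3
    with hP_def
  have hP : X ^ 4 ∣ P := by
    have h' : ofCoeffs (a - a') (b - b') (c - c') (d - d') = 0 := by
      rw [← ofCoeffs_sub, h, sub_self]
    rw [← Ideal.mem_span_singleton, ← Ideal.Quotient.eq_zero_iff_mem]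
    simpa [P, ofCoeffs, mk_X] using h'
  have hP0 : P = 0 := eq_zero_of_dvd_of_degree_lt hP <| by
    rw [degree_X_pow]
    refine lt_of_le_of_lt (b := 3) ?_ (by norm_num)
    rw [hP_def]
    compute_degree
  have h0 := congrArg (coeff · 0) hP0
  have h1 := congrArg (coeff · 1) hP0
  have h2 := congrArg (coeff · 2) hP0
  have h3 := congrArg (coeff · 3) hP0
  simp only [P, coeff_add, coeff_C_mul, coeff_X, coeff_X_pow, coeff_C, coeff_zero] at h0 h1 h2 h3
  norm_num at h0 h1 h2 h3
  omega

lemma exists_eq_ofCoeffs (t : TP 4) : ∃ a b c d : ℤ, t = ofCoeffs a b c d := by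
  obtain ⟨P, rfl⟩ := Ideal.Quotient.mk_surjective t
  induction P using Polynomial.induction_on with
  | C a => exact ⟨a, 0, 0, 0, by simp [← intCast_eq_ofCoeffs]⟩
  | add P Q hP hQ =>
    obtain ⟨a, b, c, d, hP⟩ := hP
    obtain ⟨a', b', c', d', hQ⟩ := hQ
    exact ⟨_, _, _, _, by rw [map_add, hP, hQ, ofCoeffs_add]⟩
  | monomial k a ih =>
    obtain ⟨a, b, c, d, h⟩ := ih
    exact ⟨_, _, _, _, by
      rw [pow_succ X k, ← mul_assoc, map_mul, h, mk_X, xx_eq_ofCoeffs, ofCoeffs_mul]⟩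

lemma ofCoeffs_mem_span_natCast_iff (m : ℕ) {a b c d : ℤ} :
    ofCoeffs a b c d ∈ Ideal.span {(m : TP 4)} ↔
      (m : ℤ) ∣ a ∧ (m : ℤ) ∣ b ∧ (m : ℤ) ∣ c ∧ (m : ℤ) ∣ d := by
  rw [← Int.cast_natCast, Ideal.mem_span_singleton', intCast_eq_ofCoeffs]
  constructor
  · rintro ⟨t, ht⟩
    obtain ⟨e, f, g, h, rfl⟩ := exists_eq_ofCoeffs t
    rw [ofCoeffs_mul, ofCoeffs_inj] at ht
    obtain ⟨rfl, rfl, rfl, rfl⟩ := ht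
    exact ⟨⟨e, by ring⟩, ⟨f, by ring⟩, ⟨g, by ring⟩, ⟨h, by ring⟩⟩
  · rintro ⟨⟨e, rfl⟩, ⟨f, rfl⟩, ⟨g, rfl⟩, ⟨h, rfl⟩⟩
    exact ⟨ofCoeffs e f g h, by rw [ofCoeffs_mul]; congr 1 <;> ring⟩

lemma ofCoeffs_zero_mem_span_xx (b c d : ℤ) : ofCoeffs 0 b c d ∈ Ideal.span {xx 4} :=
  Ideal.mem_span_singleton'.2 ⟨ofCoeffs b c d 0, by
    rw [xx_eq_ofCoeffs, ofCoeffs_mul]; congr 1 <;> ring⟩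

lemma exists_eq_ofCoeffs_of_sub_mem {y : TP 4} {m : ℤ}
    (h : y - m * xx 4 ∈ Ideal.span {xx 4 ^ 2}) : ∃ b c : ℤ, y = ofCoeffs 0 m b c := by
  obtain ⟨t, ht⟩ := Ideal.mem_span_singleton'.1 h
  obtain ⟨e, f, g, k, rfl⟩ := exists_eq_ofCoeffs t
  refine ⟨e, f, ?_⟩
  rw [sub_eq_iff_eq_add.1 ht.symm, xx_sq_eq_ofCoeffs, intCast_eq_ofCoeffs, xx_eq_ofCoeffs,
    ofCoeffs_mul, ofCoeffs_mul, ofCoeffs_add]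
  congr 1 <;> ring

lemma one_add_xx_pow_sub_one (k : ℕ) :
    (1 + xx 4) ^ k - 1 = ofCoeffs 0 k (k.choose 2) (k.choose 3) := by
  induction k with
  | zero => simp [ofCoeffs]
  | succ k ih =>
    have : (1 + xx 4) ^ (k + 1) - 1 = ((1 + xx 4) ^ k - 1) * (1 + xx 4) + xx 4 := by ring
    rw [this, ih, one_eq_ofCoeffs, xx_eq_ofCoeffs, ofCoeffs_add, ofCoeffs_mul, ofCoeffs_add,
      Nat.choose_succ_succ' k 1, Nat.choose_succ_succ' k 2, Nat.choose_one_right]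
    congr 1 <;> push_cast <;> ring

lemma map_ofCoeffs {F : Type*} [FunLike F (TP 4) (TP 4)] [RingHomClass F (TP 4) (TP 4)] {f : F}
    {q B C : ℤ} (hf : f (xx 4) = ofCoeffs 0 q B C) (a b c d : ℤ) :
    f (ofCoeffs a b c d) =
      ofCoeffs a (b * q) (b * B + c * q ^ 2) (b * C + 2 * c * q * B + d * q ^ 3) := by
  have h2 : ofCoeffs 0 q B C ^ 2 = ofCoeffs 0 0 (q ^ 2) (2 * q * B) := by
    rw [sq, ofCoeffs_mul]; congr 1 <;> ring
  have h3 : ofCoeffs 0 q B C ^ 3 = ofCoeffs 0 0 0 (q ^ 3) := by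
    rw [pow_succ, h2, ofCoeffs_mul]; congr 1 <;> ring
  conv_lhs => rw [ofCoeffs]
  simp only [map_add, map_mul, map_pow, map_intCast, hf, h2, h3]
  simp only [intCast_eq_ofCoeffs, ofCoeffs_mul, ofCoeffs_add]
  congr 1 <;> ring

def HasLinearCoeff (f : TP 4 →+* TP 4) (p : ℤ) : Prop :=
  ∃ b c : ℤ, f (xx 4) = ofCoeffs 0 p b c

lemma HasLinearCoeff.comp {f g : TP 4 →+* TP 4} {p q : ℤ} (hf : HasLinearCoeff f p)
    (hg : HasLinearCoeff g q) : HasLinearCoeff (f.comp g) (q * p) := by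
  obtain ⟨b, c, hf⟩ := hf
  obtain ⟨B, C, hg⟩ := hg
  exact ⟨_, _, by rw [RingHom.comp_apply, hg, map_ofCoeffs hf]⟩

lemma coeff_relations_of_semiconj {h g g' : TP 4 →+* TP 4} {p q b c B C B' C' : ℤ}
    (hh : h (xx 4) = ofCoeffs 0 p b c) (hg : g (xx 4) = ofCoeffs 0 q B C)
    (hg' : g' (xx 4) = ofCoeffs 0 q B' C') (e : h.comp g = g'.comp h) :
    b * (q - q ^ 2) = p * B' - B * p ^ 2 ∧
      c * (q - q ^ 3) = p * C' + 2 * b * q * B' - 2 * B * p * b - C * p ^ 3 := by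
  have := RingHom.congr_fun e (xx 4)
  rw [RingHom.comp_apply, RingHom.comp_apply, hg, hh, map_ofCoeffs hh, map_ofCoeffs hg',
    ofCoeffs_inj] at this
  obtain ⟨-, -, h2, h3⟩ := this
  exact ⟨by linear_combination h2, by linear_combination h3⟩

lemma eq_of_semiconj {h₁ h₂ g g' : TP 4 →+* TP 4} {p q : ℤ} (hq : q ^ 3 ≠ q)
    (hh₁ : HasLinearCoeff h₁ p) (hh₂ : HasLinearCoeff h₂ p) (hg : HasLinearCoeff g q)
    (hg' : HasLinearCoeff g' q) (e₁ : h₁.comp g = g'.comp h₁)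
    (e₂ : h₂.comp g = g'.comp h₂) : h₁ = h₂ := by
  obtain ⟨b₁, c₁, hh₁⟩ := hh₁
  obtain ⟨b₂, c₂, hh₂⟩ := hh₂
  obtain ⟨B, C, hg⟩ := hg
  obtain ⟨B', C', hg'⟩ := hg'
  obtain ⟨hb₁, hc₁⟩ := coeff_relations_of_semiconj hh₁ hg hg' e₁
  obtain ⟨hb₂, hc₂⟩ := coeff_relations_of_semiconj hh₂ hg hg' e₂
  have hq₂ : q - q ^ 2 ≠ 0 := fun h => hq (by linear_combination (-q - 1) * h)
  have hq₃ : q - q ^ 3 ≠ 0 := sub_ne_zero.2 hq.symm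
  obtain rfl : b₁ = b₂ := mul_right_cancel₀ hq₂ (hb₁.trans hb₂.symm)
  obtain rfl : c₁ = c₂ := mul_right_cancel₀ hq₃ (hc₁.trans hc₂.symm)
  exact ringHom_ext (hh₁.trans hh₂.symm)

lemma ofCoeffs_zero_pow_four (b c d : ℤ) : ofCoeffs 0 b c d ^ 4 = 0 :=
  pow_self_eq_zero_of_mem (ofCoeffs_zero_mem_span_xx b c d)

def substEquiv (u v : ℤ) : TP 4 ≃+* TP 4 :=
  RingEquiv.ofRingHom (lift (ofCoeffs 0 1 u v) (ofCoeffs_zero_pow_four 1 u v))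
    (lift (ofCoeffs 0 1 (-u) (2 * u ^ 2 - v)) (ofCoeffs_zero_pow_four 1 (-u) (2 * u ^ 2 - v)))
    (ringHom_ext <| by
      rw [RingHom.comp_apply, lift_xx, map_ofCoeffs (lift_xx _ _), RingHom.id_apply,
        xx_eq_ofCoeffs]
      congr 1 <;> ring)
    (ringHom_ext <| by
      rw [RingHom.comp_apply, lift_xx, map_ofCoeffs (lift_xx _ _), RingHom.id_apply,
        xx_eq_ofCoeffs]
      congr 1 <;> ring)

lemma substEquiv_xx (u v : ℤ) : substEquiv u v (xx 4) = ofCoeffs 0 1 u v :=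
  lift_xx _ (ofCoeffs_zero_pow_four 1 u v)

lemma substEquiv_symm_xx (u v : ℤ) :
    (substEquiv u v).symm (xx 4) = ofCoeffs 0 1 (-u) (2 * u ^ 2 - v) :=
  lift_xx _ (ofCoeffs_zero_pow_four 1 (-u) (2 * u ^ 2 - v))

lemma map_span_xx_substEquiv (u v : ℤ) :
    (Ideal.span {xx 4}).map (substEquiv u v).toRingHom = Ideal.span {xx 4} :=
  map_span_xx_eq _ (substEquiv_xx u v ▸ ofCoeffs_zero_mem_span_xx _ _ _)
    (substEquiv_symm_xx u v ▸ ofCoeffs_zero_mem_span_xx _ _ _)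

lemma hasLinearCoeff_substEquiv (u v : ℤ) : HasLinearCoeff (substEquiv u v).toRingHom 1 :=
  ⟨u, v, substEquiv_xx u v⟩

lemma substEquiv_comp_eq_comp {g g' : TP 4 →+* TP 4} {u v c : ℤ}
    (hg : g (xx 4) = ofCoeffs 0 2 (2 * u + 1) c) (hg' : g' (xx 4) = ofCoeffs 0 2 1 0)
    (hv : 6 * v = 4 * u ^ 2 - 2 * u + c) :
    (substEquiv u v).toRingHom.comp g = g'.comp (substEquiv u v).toRingHom := by
  refine ringHom_ext ?_
  simp only [RingHom.comp_apply, RingEquiv.toRingHom_eq_coe, RingEquiv.coe_toRingHom]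
  rw [hg, substEquiv_xx, map_ofCoeffs (substEquiv_xx u v), map_ofCoeffs hg', ofCoeffs_inj]
  exact ⟨rfl, by ring, by ring, by linear_combination -hv⟩

end TP

namespace AdamsFamily

open TP

lemma one_add_xx_pow_sub_one_mem (n p : ℕ) : (1 + xx n) ^ p - 1 ∈ Ideal.span {xx n} :=
  Ideal.mem_span_singleton.2 (by simpa using sub_dvd_pow_sub_pow (1 + xx n) 1 p)

def standardψ (n p : ℕ) : TP n →+* TP n :=
  lift ((1 + xx n) ^ p - 1) (pow_self_eq_zero_of_mem (one_add_xx_pow_sub_one_mem n p))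

@[simp]
lemma standardψ_xx (n p : ℕ) : standardψ n p (xx n) = (1 + xx n) ^ p - 1 := lift_xx _ _

lemma standardψ_comp (n p q : ℕ) : (standardψ n p).comp (standardψ n q) = standardψ n (p * q) :=
  ringHom_ext <| by simp [← pow_mul]

def standard (n : ℕ) : AdamsFamily n where
  ψ p := standardψ n p
  maps_ideal p a ha := by
    obtain ⟨t, rfl⟩ := Ideal.mem_span_singleton'.1 ha
    rw [map_mul]
    exact Ideal.mul_mem_left _ _ (by simpa using one_add_xx_pow_sub_one_mem n p)
  comm p q := by rw [standardψ_comp, standardψ_comp, mul_comm]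
  frob p a := by
    have := Fact.mk p.2
    refine sub_pow_mem_span_of_xx p _ ?_ a
    obtain ⟨r, hr⟩ := exists_add_pow_prime_eq p.2 (1 : TP n) (xx n)
    rw [standardψ_xx, hr, one_pow]
    exact Ideal.mem_span_singleton.2 ⟨1 * xx n * r, by ring⟩

lemma exists_conjugating_coeffs {b c c₃ : ℤ} (hb : 2 ∣ b - 1) (hc : 2 ∣ c) (hc₃ : 3 ∣ c₃ - 1)
    (h : c₃ = 4 * c + b ^ 2) : ∃ u v : ℤ, b = 2 * u + 1 ∧ 6 * v = 4 * u ^ 2 - 2 * u + c := by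
  obtain ⟨u, hu⟩ := hb
  obtain ⟨m, hm⟩ := hc₃
  have h₃ : 4 * c + 4 * (u * u) + 4 * u = 3 * m := by
    rw [show b = 2 * u + 1 by omega] at h
    linear_combination hm - h
  obtain ⟨v, hv⟩ : 6 ∣ 4 * u ^ 2 - 2 * u + c := by rw [sq]; omega
  exact ⟨u, v, by omega, hv.symm⟩

lemma exists_substEquiv_comp_eq_comp (R : AdamsFamily 4) (hR₂ : HasLinearCoeff (R.ψ P2) 2)
    (hR₃ : HasLinearCoeff (R.ψ P3) 3) {g : TP 4 →+* TP 4} (hg : g (xx 4) = ofCoeffs 0 2 1 0) :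
    ∃ u v : ℤ, (substEquiv u v).toRingHom.comp (R.ψ P2) = g.comp (substEquiv u v).toRingHom := by
  obtain ⟨b, c, hR₂⟩ := hR₂
  obtain ⟨b₃, c₃, hR₃⟩ := hR₃
  have frob₂ := R.frob P2 (xx 4)
  rw [hR₂, show (P2 : ℕ) = 2 from rfl, xx_sq_eq_ofCoeffs, ofCoeffs_sub,
    ofCoeffs_mem_span_natCast_iff] at frob₂
  have frob₃ := R.frob P3 (xx 4)
  rw [hR₃, show (P3 : ℕ) = 3 from rfl, xx_cube_eq_ofCoeffs, ofCoeffs_sub,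
    ofCoeffs_mem_span_natCast_iff] at frob₃
  simp only [Nat.cast_ofNat, sub_zero] at frob₂ frob₃
  have hc₃ : c₃ = 4 * c + b ^ 2 := by
    obtain ⟨h₂, h₃⟩ := coeff_relations_of_semiconj hR₃ hR₂ hR₂ (R.comm P3 P2)
    obtain rfl : b₃ = 3 * b := by linarith
    linarith
  obtain ⟨u, v, rfl, hv⟩ := exists_conjugating_coeffs frob₂.2.2.1 frob₂.2.2.2 frob₃.2.2.2 hc₃
  exact ⟨u, v, substEquiv_comp_eq_comp hR₂ hg hv⟩

theorem adamsIso_of_linearCoeff (R S : AdamsFamily 4)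
    (hS : ∀ p : Nat.Primes, S.ψ p (xx 4) = (1 + xx 4) ^ (p : ℕ) - 1)
    (hR : ∀ p : Nat.Primes, R.ψ p (xx 4) - ((p : ℕ) : TP 4) * xx 4 ∈ Ideal.span {xx 4 ^ 2}) :
    AdamsIso R S := by
  have hRlin (p : Nat.Primes) : HasLinearCoeff (R.ψ p) (p : ℕ) :=
    exists_eq_ofCoeffs_of_sub_mem (by rw [Int.cast_natCast]; exact hR p)
  have hSlin (p : Nat.Primes) : HasLinearCoeff (S.ψ p) (p : ℕ) :=
    ⟨_, _, by rw [hS, one_add_xx_pow_sub_one]⟩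
  obtain ⟨u, v, h₂⟩ := exists_substEquiv_comp_eq_comp R (hRlin P2) (hRlin P3)
    (g := S.ψ P2) (by rw [hS, one_add_xx_pow_sub_one]; rfl)
  refine ⟨substEquiv u v, map_span_xx_substEquiv u v, fun p => ?_⟩
  refine eq_of_semiconj (q := 2) (by norm_num)
    (by simpa using (hasLinearCoeff_substEquiv u v).comp (hRlin p))
    (by simpa using (hSlin p).comp (hasLinearCoeff_substEquiv u v)) (hRlin P2) (hSlin P2) ?_ ?_
  · rw [RingHom.comp_assoc, R.comm, ← RingHom.comp_assoc, h₂, RingHom.comp_assoc]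
  · rw [RingHom.comp_assoc, h₂, ← RingHom.comp_assoc, S.comm, RingHom.comp_assoc]

end AdamsFamily

theorem stmt10 :
    (∃ S : AdamsFamily 4, ∀ p : Nat.Primes, S.ψ p (xx 4) = (1 + xx 4) ^ (p : ℕ) - 1) ∧
    (∀ S R : AdamsFamily 4,
      (∀ p : Nat.Primes, S.ψ p (xx 4) = (1 + xx 4) ^ (p : ℕ) - 1) →
      (∀ p : Nat.Primes,
        R.ψ p (xx 4) - ((p : ℕ) : TP 4) * xx 4 ∈ Ideal.span {xx 4 ^ 2}) →
      AdamsIso R S) :=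
  ⟨⟨AdamsFamily.standard 4, fun p => AdamsFamily.standardψ_xx 4 p⟩,
    fun S R hS hR => AdamsFamily.adamsIso_of_linearCoeff R S hS hR⟩
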